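/- More generally, for α, β > 0 the function f(λ) = (2/Γ(α)) (βλ)^{α/2} K_α(2√(βλ)) satisfies λ f''(λ) + (1-α) f'(λ) - β f(λ) = 0, and f is the Laplace transform ∫_0^∞ e^{-λx} g(x) dx of the inverse gamma density g(x) = (β^α/Γ(α)) x^{-α-1} e^{-β/x}. -/

import Mathlib

/-!
Write `G_p(λ) = ∫₀^∞ x^p e^{-β/x} e^{-λx} dx`. The substitution `t = λx` in the integral
defining `K_α` gives `f = (β^α/Γ(α)) G_{-α-1}`, which is the Laplace transform of `g`.
Differentiating under the integral sign gives `G_p' = -G_{p+1}`, so `f'` and `f''` are multiples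
of `G_{-α}` and `G_{1-α}`. Integrating the derivative of `x^q e^{-β/x} e^{-λx}`, which vanishes at
both ends of `(0, ∞)`, gives `q G_{q-1} + β G_{q-2} = λ G_q`; for `q = 1 - α` this is the ODE.
-/
noncomputable section

/-- The modified Bessel function of the second kind of order `α`, via the integral
representation `K_α(z) = (1/2)(z/2)^α ∫₀^∞ t^{-α-1} exp(-t - z²/(4t)) dt`. -/
def besselK (α z : ℝ) : ℝ :=
  (1 / 2) * (z / 2) ^ α *
    ∫ t in Set.Ioi (0 : ℝ), t ^ (-α - 1) * Real.exp (-t - z ^ 2 / (4 * t))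

open Real MeasureTheory Set Filter Topology

theorem Real.exp_neg_div_le_factorial_div_pow_mul_pow {β x : ℝ} (hβ : 0 < β) (hx : 0 < x)
    (n : ℕ) : exp (-β / x) ≤ n.factorial / β ^ n * x ^ n := by
  have h := pow_div_factorial_le_exp (x := β / x) (div_nonneg hβ.le hx.le) n
  rw [neg_div, exp_neg]
  calc (exp (β / x))⁻¹ ≤ ((β / x) ^ n / n.factorial)⁻¹ := inv_anti₀ (by positivity) h
    _ = n.factorial / β ^ n * x ^ n := by rw [div_pow]; field_simp

namespace InverseGamma

def integrand (β p l x : ℝ) : ℝ := x ^ p * exp (-β / x) * exp (-l * x)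

def laplaceIntegral (β p l : ℝ) : ℝ := ∫ x in Ioi 0, integrand β p l x

variable {β l : ℝ}

theorem integrand_nonneg (β p l : ℝ) {x : ℝ} (hx : 0 ≤ x) : 0 ≤ integrand β p l x := by
  unfold integrand; positivity

theorem integrand_le (hβ : 0 < β) (p l : ℝ) (n : ℕ) {x : ℝ} (hx : 0 < x) :
    integrand β p l x ≤ n.factorial / β ^ n * (x ^ (p + n) * exp (-l * x)) := by
  have hsplit : x ^ (p + n) = x ^ p * x ^ n := by rw [rpow_add hx, rpow_natCast]
  calc integrand β p l x
      ≤ x ^ p * (n.factorial / β ^ n * x ^ n) * exp (-l * x) := by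
        unfold integrand
        gcongr
        exact exp_neg_div_le_factorial_div_pow_mul_pow hβ hx n
    _ = n.factorial / β ^ n * (x ^ (p + n) * exp (-l * x)) := by rw [hsplit]; ring

theorem continuousOn_integrand (β p l : ℝ) : ContinuousOn (integrand β p l) (Ioi 0) := by
  intro x (hx : 0 < x)
  unfold integrand
  refine ContinuousAt.continuousWithinAt ?_
  fun_prop (disch := simp [hx.ne'])

theorem integrableOn_integrand (hβ : 0 < β) (p : ℝ) (hl : 0 < l) :
    IntegrableOn (integrand β p l) (Ioi 0) := by
  obtain ⟨n, hn⟩ := exists_nat_gt (-p - 1)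
  have hmajorant : IntegrableOn
      (fun x ↦ n.factorial / β ^ n * (x ^ (p + n) * exp (-l * x))) (Ioi 0) := by
    refine Integrable.const_mul ?_ _
    simpa [IntegrableOn] using
      integrableOn_rpow_mul_exp_neg_mul_rpow (p := 1) (by linarith) one_pos hl
  refine hmajorant.mono' ((continuousOn_integrand β p l).aestronglyMeasurable measurableSet_Ioi) ?_
  filter_upwards [ae_restrict_mem measurableSet_Ioi] with x hx
  rw [norm_of_nonneg (integrand_nonneg β p l (le_of_lt hx))]
  exact integrand_le hβ p l n hx

theorem hasDerivAt_laplaceIntegral (hβ : 0 < β) (p : ℝ) (hl : 0 < l) :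
    HasDerivAt (laplaceIntegral β p) (-laplaceIntegral β (p + 1) l) l := by
  have hmeas : ∀ p l, AEStronglyMeasurable (integrand β p l) (volume.restrict (Ioi 0)) :=
    fun p l ↦ (continuousOn_integrand β p l).aestronglyMeasurable measurableSet_Ioi
  have key := hasDerivAt_integral_of_dominated_loc_of_deriv_le
    (F := fun l x ↦ integrand β p l x) (F' := fun l x ↦ -integrand β (p + 1) l x)
    (bound := integrand β (p + 1) (l / 2)) (Metric.ball_mem_nhds l (half_pos hl))
    (.of_forall (hmeas p)) (integrableOn_integrand hβ p hl) (hmeas (p + 1) l).neg ?_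
    (integrableOn_integrand hβ (p + 1) (half_pos hl)) ?_
  · unfold laplaceIntegral
    simpa only [integral_neg] using key.2
  · filter_upwards [ae_restrict_mem measurableSet_Ioi] with x (hx : 0 < x) l' hl'
    rw [Metric.mem_ball, Real.dist_eq, abs_lt] at hl'
    rw [norm_neg, norm_of_nonneg (integrand_nonneg _ _ _ (le_of_lt hx))]
    unfold integrand
    gcongr
    linarith
  · filter_upwards [ae_restrict_mem measurableSet_Ioi] with x hx l' _
    have hexp : HasDerivAt (fun l ↦ exp (-l * x)) (exp (-l' * x) * -x) l' := by
      simpa using ((hasDerivAt_id l').neg.mul_const x).exp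
    refine (hexp.const_mul (x ^ p * exp (-β / x))).congr_deriv ?_
    simp only [integrand, rpow_add_one (ne_of_gt hx)]
    ring

theorem eqOn_deriv_of_eqOn_const_mul_laplaceIntegral (hβ : 0 < β) {f : ℝ → ℝ} {C p : ℝ}
    (hf : EqOn f (fun l ↦ C * laplaceIntegral β p l) (Ioi 0)) :
    EqOn (deriv f) (fun l ↦ -C * laplaceIntegral β (p + 1) l) (Ioi 0) := by
  intro l hl
  have hfl : f =ᶠ[𝓝 l] fun l ↦ C * laplaceIntegral β p l :=
    eventually_of_mem (Ioi_mem_nhds hl) hf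
  rw [hfl.deriv_eq, ((hasDerivAt_laplaceIntegral hβ p hl).const_mul C).deriv]
  ring

theorem hasDerivAt_integrand (β q l : ℝ) {x : ℝ} (hx : 0 < x) :
    HasDerivAt (integrand β q l)
      (q * integrand β (q - 1) l x + β * integrand β (q - 2) l x - l * integrand β q l x) x := by
  have hpow : HasDerivAt (fun y ↦ y ^ q) (q * x ^ (q - 1)) x :=
    hasDerivAt_rpow_const (Or.inl (ne_of_gt hx))
  have hinv : HasDerivAt (fun y ↦ exp (-β / y)) (exp (-β / x) * (β / x ^ 2)) x := by
    have h := ((hasDerivAt_inv (ne_of_gt hx)).const_mul (-β)).exp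
    simp only [← div_eq_mul_inv] at h
    convert h using 2
    ring
  have hlin : HasDerivAt (fun y ↦ exp (-l * y)) (exp (-l * x) * -l) x := by
    simpa using ((hasDerivAt_id x).const_mul (-l)).exp
  refine ((hpow.mul hinv).mul hlin).congr_deriv ?_
  have hsub2 : x ^ (q - 2) = x ^ q / x ^ 2 := by
    rw [rpow_sub hx, rpow_two]
  simp only [integrand, hsub2, Pi.mul_apply]
  ring

theorem continuousAt_indicator_integrand_zero (hβ : 0 < β) (q l : ℝ) :
    ContinuousAt ((Ioi 0).indicator (integrand β q l)) 0 := by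
  obtain ⟨n, hn⟩ := exists_nat_gt (-q)
  have hqn : 0 < q + n := by linarith
  let majorant x := n.factorial / β ^ n * (|x| ^ (q + n) * exp (-l * x))
  have hmajorant : Tendsto majorant (𝓝 0) (𝓝 0) := by
    have hcont : ContinuousAt majorant 0 := by
      fun_prop (disch := exact Or.inr hqn.le)
    simpa [majorant, zero_rpow hqn.ne'] using hcont.tendsto
  rw [ContinuousAt, indicator_of_notMem (self_notMem_Ioi (a := (0 : ℝ)))]
  refine squeeze_zero_norm (fun x ↦ ?_) hmajorant
  by_cases hx : 0 < x
  · rw [indicator_of_mem (mem_Ioi.2 hx), norm_of_nonneg (integrand_nonneg β q l hx.le)]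
    simpa only [majorant, abs_of_pos hx] using integrand_le hβ q l n hx
  · rw [indicator_of_notMem (mt mem_Ioi.1 hx), norm_zero]
    positivity

theorem tendsto_integrand_atTop (hβ : 0 ≤ β) (q : ℝ) (hl : 0 < l) :
    Tendsto (integrand β q l) atTop (𝓝 0) := by
  refine squeeze_zero' ?_ ?_ (tendsto_rpow_mul_exp_neg_mul_atTop_nhds_zero q l hl)
  · filter_upwards [eventually_ge_atTop 0] with x hx using integrand_nonneg β q l hx
  · filter_upwards [eventually_gt_atTop 0] with x hx
    have hexp : exp (-β / x) ≤ 1 :=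
      exp_le_one_iff.2 (div_nonpos_of_nonpos_of_nonneg (neg_nonpos.2 hβ) hx.le)
    calc integrand β q l x ≤ x ^ q * 1 * exp (-l * x) := by unfold integrand; gcongr
      _ = x ^ q * exp (-l * x) := by ring

theorem laplaceIntegral_recurrence (hβ : 0 < β) (q : ℝ) (hl : 0 < l) :
    q * laplaceIntegral β (q - 1) l + β * laplaceIntegral β (q - 2) l
      - l * laplaceIntegral β q l = 0 := by
  have hint (p : ℝ) := integrableOn_integrand hβ p hl
  -- `integrand β q l 0 = 0 ^ q` is a junk value, so the primitive is extended by zero on `x ≤ 0`.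
  have hderiv (x : ℝ) (hx : x ∈ Ioi 0) : HasDerivAt ((Ioi 0).indicator (integrand β q l))
      (q * integrand β (q - 1) l x + β * integrand β (q - 2) l x - l * integrand β q l x) x :=
    (hasDerivAt_integrand β q l hx).congr_of_eventuallyEq
      (eventuallyEq_of_mem (Ioi_mem_nhds hx) fun y hy ↦ indicator_of_mem hy _)
  have hatTop : Tendsto ((Ioi 0).indicator (integrand β q l)) atTop (𝓝 0) :=
    (tendsto_integrand_atTop hβ.le q hl).congr'
      (eventuallyEq_of_mem (Ioi_mem_atTop 0) fun y hy ↦ (indicator_of_mem hy _).symm)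
  have h₁ := (hint (q - 1)).const_mul q
  have h₂ := (hint (q - 2)).const_mul β
  have h₃ := (hint q).const_mul l
  have hftc := integral_Ioi_of_hasDerivAt_of_tendsto
    (continuousAt_indicator_integrand_zero hβ q l).continuousWithinAt hderiv
    ((h₁.add h₂).sub h₃) hatTop
  rwa [indicator_of_notMem self_notMem_Ioi, sub_zero, integral_sub (by exact h₁.add h₂) h₃,
    integral_add h₁ h₂, integral_const_mul, integral_const_mul, integral_const_mul] at hftc

theorem integral_rpow_mul_exp_neg_sub_div (β p : ℝ) (hl : 0 < l) :
    ∫ t in Ioi 0, t ^ p * exp (-t - β * l / t) = l ^ (p + 1) * laplaceIntegral β p l := by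
  have hsub := integral_comp_mul_left_Ioi' (fun t ↦ t ^ p * exp (-t - β * l / t)) 0 hl
  rw [mul_zero] at hsub
  rw [← hsub, smul_eq_mul, laplaceIntegral, ← integral_const_mul, ← integral_const_mul]
  refine setIntegral_congr_fun measurableSet_Ioi fun x (hx : 0 < x) ↦ ?_
  have hexp : exp (-(l * x) - β * l / (l * x)) = exp (-β / x) * exp (-l * x) := by
    rw [← exp_add]
    congr 1
    field_simp
    ring
  simp only [integrand, mul_rpow hl.le hx.le, rpow_add_one hl.ne', hexp]
  ring

theorem rpow_mul_besselK_two_sqrt (hβ : 0 < β) (α : ℝ) (hl : 0 < l) :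
    (β * l) ^ (α / 2) * besselK α (2 * √(β * l)) = β ^ α / 2 * laplaceIntegral β (-α - 1) l := by
  have hs : 0 < β * l := mul_pos hβ hl
  have hexponent (t : ℝ) : (2 * √(β * l)) ^ 2 / (4 * t) = β * l / t := by
    rw [mul_pow, sq_sqrt hs.le, show (2 : ℝ) ^ 2 = 4 by norm_num,
      mul_div_mul_left _ _ four_ne_zero]
  have hsqrt : (2 * √(β * l) / 2) ^ α = (β * l) ^ (α / 2) := by
    rw [mul_div_cancel_left₀ _ two_ne_zero, sqrt_eq_rpow, ← rpow_mul hs.le, one_div_mul_eq_div]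
  have hpow : (β * l) ^ (α / 2) * (β * l) ^ (α / 2) * l ^ (-α - 1 + 1) = β ^ α := by
    rw [← rpow_add hs, add_halves, mul_rpow hβ.le hl.le, mul_assoc, ← rpow_add hl]
    simp
  simp only [besselK, hexponent, hsqrt, integral_rpow_mul_exp_neg_sub_div β (-α - 1) hl]
  linear_combination laplaceIntegral β (-α - 1) l / 2 * hpow

end InverseGamma

open InverseGamma

theorem inverse_gamma_laplace_ODE_general (α β : ℝ) (hβ : 0 < β)
    (f g : ℝ → ℝ)
    (hf : ∀ lam : ℝ, f lam = (2 / Real.Gamma α) * (β * lam) ^ (α / 2) *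
      besselK α (2 * Real.sqrt (β * lam)))
    (hg : ∀ x : ℝ, g x = β ^ α / Real.Gamma α * x ^ (-α - 1) * Real.exp (-β / x)) :
    (∀ lam : ℝ, 0 < lam →
      lam * deriv (deriv f) lam + (1 - α) * deriv f lam - β * f lam = 0) ∧
    ∀ lam : ℝ, 0 < lam →
      f lam = ∫ x in Set.Ioi (0 : ℝ), Real.exp (-lam * x) * g x := by
  set C := β ^ α / Gamma α
  have hf₀ : EqOn f (fun l ↦ C * laplaceIntegral β (-α - 1) l) (Ioi 0) := by
    intro l hl
    rw [hf, mul_assoc, rpow_mul_besselK_two_sqrt hβ α hl]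
    ring
  have hf₁ := eqOn_deriv_of_eqOn_const_mul_laplaceIntegral hβ hf₀
  have hf₂ := eqOn_deriv_of_eqOn_const_mul_laplaceIntegral hβ hf₁
  refine ⟨fun l hl ↦ ?_, fun l hl ↦ ?_⟩
  · rw [hf₂ hl, hf₁ hl, hf₀ hl, show -α - 1 + 1 + 1 = 1 - α by ring,
      show -α - 1 + 1 = 1 - α - 1 by ring, show -α - 1 = 1 - α - 2 by ring]
    linear_combination (-C) * laplaceIntegral_recurrence hβ (1 - α) hl
  · simp only [hf₀ hl, laplaceIntegral, ← integral_const_mul]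
    congr 1 with x
    rw [hg, integrand]
    ring

/-- **(Section 7.4, inverse gamma Laplace transform and its ODE.)**  For `α, β > 0`,
the function `f(λ) = (2/Γ(α))(βλ)^{α/2} K_α(2√(βλ))` satisfies
`λ f''(λ) + (1-α) f'(λ) - β f(λ) = 0` for `λ > 0`, and `f` is the Laplace transform
of the inverse gamma density `g(x) = (β^α/Γ(α)) x^{-α-1} e^{-β/x}`. -/
theorem inverse_gamma_laplace_ODE (α β : ℝ) (hα : 0 < α) (hβ : 0 < β)
    (f g : ℝ → ℝ)
    (hf : ∀ lam : ℝ, f lam = (2 / Real.Gamma α) * (β * lam) ^ (α / 2) *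
      besselK α (2 * Real.sqrt (β * lam)))
    (hg : ∀ x : ℝ, g x = β ^ α / Real.Gamma α * x ^ (-α - 1) * Real.exp (-β / x)) :
    (∀ lam : ℝ, 0 < lam →
      lam * deriv (deriv f) lam + (1 - α) * deriv f lam - β * f lam = 0) ∧
    ∀ lam : ℝ, 0 < lam →
      f lam = ∫ x in Set.Ioi (0 : ℝ), Real.exp (-lam * x) * g x :=
  inverse_gamma_laplace_ODE_general α β hβ f g hf hg

end
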